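/- arXiv:0809.2938 — 4 statements merged into one kernel-verified Lean document; each statement's English description precedes it below -/
import Mathlib

section
/- Let (X,d) be a compact metric space, f : X → X a continuous map, and μ an ergodic f-invariant Borel probability measure. For every ε > 0 and μ-almost every x ∈ X, limsup_{n→∞} (1/n) log R_n(x,ε) ≤ h_μ(f). -/
/-!
Fix a finite partition `P` into sets of diameter `< ε`. The atom `Q^{(n)}(x)` of its `n`-th
refinement lies in the Bowen ball `B(x,n,ε)`, so `R_n(x,ε)` is at most the first return time of `x`
to `Q^{(n)}(x)`, which is finite a.e. by Poincaré recurrence. A Kac-type estimate and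
Borel–Cantelli show that a.e. `x` returns to `Q^{(n)}(x)` before time `e^{nδ} / μ(Q^{(n)}(x))` for
all large `n`, so `limsup (1/n) log R_n(x,ε) ≤ limsup -(1/n) log μ(Q^{(n)}(x))`. The right-hand
side is at most `h_μ(f,P) ≤ h_μ(f)` a.e.: this is the upper half of the Shannon–McMillan–Breiman
theorem, which follows from Barron's lemma and the maximal ergodic lemma.
-/

open MeasureTheory Filter Set Metric Topology
open scoped ENNReal NNReal

noncomputable section

/-- The dynamical (Bowen) ball `B(x,n,ε)`. -/
def dynBall {X : Type*} [PseudoMetricSpace X] (f : X → X) (x : X) (n : ℕ) (ε : ℝ) : Set X :=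
  {y | ∀ j < n, dist (f^[j] x) (f^[j] y) < ε}

/-- The `n`-th return time `R_n(x,ε)` of `x` to the dynamical ball `B(x,n,ε)`
(junk value `0` when the orbit never returns; theorems assert nonemptiness of the
return-time set separately, which corresponds to finiteness of the return time). -/
def retTime {X : Type*} [PseudoMetricSpace X] (f : X → X) (x : X) (n : ℕ) (ε : ℝ) : ℕ :=
  sInf {k | 1 ≤ k ∧ f^[k] x ∈ dynBall f x n ε}

/-- The `n`-th minimal return time `S_n(x,ε)` of the dynamical ball `B(x,n,ε)` to itself. -/
def minRetTime {X : Type*} [PseudoMetricSpace X] (f : X → X) (x : X) (n : ℕ) (ε : ℝ) : ℕ :=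
  sInf {k | 1 ≤ k ∧ (f^[k] ⁻¹' dynBall f x n ε ∩ dynBall f x n ε).Nonempty}

/-- `limsup_{n→∞} (1/n) log R_n(x,ε)`, as an extended nonnegative real. -/
def recRateSup {X : Type*} [PseudoMetricSpace X] (f : X → X) (x : X) (ε : ℝ) : ℝ≥0∞ :=
  Filter.atTop.limsup fun n : ℕ => ENNReal.ofReal (Real.log (retTime f x n ε) / n)

/-- `liminf_{n→∞} (1/n) log R_n(x,ε)`, as an extended nonnegative real. -/
def recRateInf {X : Type*} [PseudoMetricSpace X] (f : X → X) (x : X) (ε : ℝ) : ℝ≥0∞ :=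
  Filter.atTop.liminf fun n : ℕ => ENNReal.ofReal (Real.log (retTime f x n ε) / n)

/-- `P : Fin m → Set X` is a finite measurable partition of `X` (some cells may be empty). -/
def IsFinPartition {X : Type*} [MeasurableSpace X] {m : ℕ} (P : Fin m → Set X) : Prop :=
  (∀ i, MeasurableSet (P i)) ∧ Pairwise (Function.onFun Disjoint P) ∧ (⋃ i, P i) = univ

/-- The entropy `H_μ(P) = -∑ μ(P i) log μ(P i)` of a finite family of sets. -/
def entH {X : Type*} [MeasurableSpace X] (μ : Measure X) {ι : Type*} [Fintype ι]
    (P : ι → Set X) : ℝ :=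
  -∑ i, (μ (P i)).toReal * Real.log (μ (P i)).toReal

/-- The dynamical refinement `Q^{(n)} = ⋁_{j=0}^{n-1} f⁻ʲ Q` of a finite partition,
indexed by itineraries `s : Fin n → Fin m`. -/
def refinePart {X : Type*} (f : X → X) {m : ℕ} (P : Fin m → Set X) (n : ℕ) :
    (Fin n → Fin m) → Set X :=
  fun s => ⋂ j : Fin n, f^[(j : ℕ)] ⁻¹' P (s j)

/-- The Kolmogorov–Sinai entropy `h_μ(f,Q) = lim_n (1/n) H_μ(Q^{(n)})` of `μ` with respect to
a finite partition (the limit exists by subadditivity, so it equals the `liminf` used here). -/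
def partKS {X : Type*} [MeasurableSpace X] (μ : Measure X) (f : X → X) {m : ℕ}
    (P : Fin m → Set X) : ℝ≥0∞ :=
  Filter.atTop.liminf fun n : ℕ => ENNReal.ofReal (entH μ (refinePart f P n) / n)

/-- The metric (Kolmogorov–Sinai) entropy `h_μ(f)`: the supremum of `h_μ(f,Q)` over all
finite measurable partitions `Q`. -/
def metricEntropy {X : Type*} [MeasurableSpace X] (μ : Measure X) (f : X → X) : ℝ≥0∞ :=
  ⨆ (m : ℕ) (P : Fin m → Set X) (_ : IsFinPartition P), partKS μ f P


section

open Function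

variable {X : Type*}

section Auxiliary

variable [MeasurableSpace X] {μ : Measure X}

theorem measure_iUnion_measure_lt_le {ι : Type*} [Fintype ι] (A : ι → Set X) (a : ι → ℝ≥0∞) :
    μ (⋃ (i) (_ : μ (A i) < a i), A i) ≤ ∑ i, a i :=
  (measure_iUnion_fintype_le _ _).trans (Finset.sum_le_sum fun i _ => by
    by_cases h : μ (A i) < a i
    · simpa [h] using h.le
    · simp [h])

theorem ae_eventually_notMem_of_measure_le_exp {B : ℕ → Set X} {c : ℝ} (hc : 0 < c)
    (hB : ∀ n, μ (B n) ≤ ENNReal.ofReal (Real.exp (-(n * c)))) :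
    ∀ᵐ x ∂μ, ∀ᶠ n in atTop, x ∉ B n := by
  refine ae_eventually_notMem (ne_top_of_le_ne_top ?_ (ENNReal.tsum_le_tsum hB))
  have hgeom : ∀ n : ℕ, ENNReal.ofReal (Real.exp (-(n * c))) = ENNReal.ofReal (Real.exp (-c)) ^ n :=
    fun n => by rw [← ENNReal.ofReal_pow (Real.exp_nonneg _), ← Real.exp_nat_mul]; ring_nf
  simp only [hgeom, ENNReal.tsum_geometric, ne_eq, ENNReal.inv_eq_top, tsub_eq_zero_iff_le,
    not_le]
  rw [← ENNReal.ofReal_one, ENNReal.ofReal_lt_ofReal_iff one_pos]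
  exact Real.exp_lt_one_iff.2 (neg_lt_zero.2 hc)

theorem ae_le_of_forall_pos_ae_le_add {a b : X → ℝ≥0∞}
    (h : ∀ δ : ℝ, 0 < δ → ∀ᵐ x ∂μ, a x ≤ b x + ENNReal.ofReal δ) : ∀ᵐ x ∂μ, a x ≤ b x := by
  filter_upwards [ae_all_iff.2 fun j : ℕ => h (1 / (j + 1)) Nat.one_div_pos_of_nat] with x hx
  refine ENNReal.le_of_forall_pos_le_add fun ε hε _ => ?_
  obtain ⟨j, hj⟩ := exists_nat_one_div_lt hε
  refine (hx j).trans (add_le_add le_rfl ?_)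
  rw [← ENNReal.ofReal_coe_nnreal]
  exact ENNReal.ofReal_le_ofReal (by exact_mod_cast hj.le)

theorem Ergodic.ae_le_or_ae_lt_of_ae_comp_le [IsFiniteMeasure μ] {f : X → X} (hf : Ergodic f μ)
    {g : X → ℝ≥0∞} (hg : Measurable g) (hgf : ∀ᵐ x ∂μ, g (f x) ≤ g x) (c : ℝ≥0∞) :
    (∀ᵐ x ∂μ, g x ≤ c) ∨ ∀ᵐ x ∂μ, c < g x := by
  have hs : MeasurableSet {x | c < g x} := measurableSet_lt measurable_const hg
  have hinv : f ⁻¹' {x | c < g x} ≤ᵐ[μ] {x | c < g x} :=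
    hgf.mono fun x hx (hfx : c < g (f x)) => hfx.trans_le hx
  refine (hf.ae_empty_or_univ_of_preimage_ae_le' hs.nullMeasurableSet hinv
    (measure_ne_top μ _)).imp (fun h => ?_) fun h => ?_
  · filter_upwards [h] with x hx
    exact not_lt.1 fun hlt => notMem_empty x (cast hx hlt)
  · filter_upwards [h] with x hx
    exact cast hx.symm (mem_univ x)

end Auxiliary

theorem limsup_ofReal_div_le_of_le_succ {a b : ℕ → ℝ} (h : ∀ n, a n ≤ b (n + 1)) :
    atTop.limsup (fun n : ℕ => ENNReal.ofReal (a n / n))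
      ≤ atTop.limsup (fun n : ℕ => ENNReal.ofReal (b n / n)) := by
  have hratio : Tendsto (fun n : ℕ => ENNReal.ofReal (1 + 1 / n)) atTop (𝓝 1) := by
    simpa using ENNReal.tendsto_ofReal
      ((tendsto_const_nhds (x := (1 : ℝ))).add tendsto_one_div_atTop_nhds_zero_nat)
  calc atTop.limsup (fun n : ℕ => ENNReal.ofReal (a n / n))
      ≤ atTop.limsup ((fun n : ℕ => ENNReal.ofReal (b (n + 1) / ↑(n + 1)))
          * fun n : ℕ => ENNReal.ofReal (1 + 1 / n)) := by
        refine limsup_le_limsup ((eventually_ge_atTop 1).mono fun n hn => ?_)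
        have hn : (0 : ℝ) < n := by exact_mod_cast hn
        rw [Pi.mul_apply, ← ENNReal.ofReal_mul' (by positivity)]
        refine ENNReal.ofReal_le_ofReal ((div_le_div_of_nonneg_right (h n) hn.le).trans_eq ?_)
        push_cast
        field_simp
    _ ≤ _ := ENNReal.limsup_mul_le' (.inr (by rw [hratio.limsup_eq]; exact ENNReal.one_ne_top))
          (.inr (by rw [hratio.limsup_eq]; exact one_ne_zero))
    _ = atTop.limsup (fun n : ℕ => ENNReal.ofReal (b n / n)) := by
        rw [hratio.limsup_eq, mul_one, limsup_nat_add (fun n : ℕ => ENNReal.ofReal (b n / n)) 1]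

/-- The witness is `q = n / k + 1` for a large `n` with `H / k + 3 δ < I n / n`. -/
theorem exists_mul_lt_of_frequently_lt_div {I S : ℕ → ℝ} {H δ : ℝ} {k : ℕ} (hk : 0 < k)
    (hδ : 0 < δ) (hH : 0 ≤ H) (hI : Monotone I)
    (hIS : ∀ᶠ q : ℕ in atTop, I (q * k) ≤ q * (k * δ) + S q)
    (hfreq : ∃ᶠ n : ℕ in atTop, H / k + 3 * δ < I n / n) : ∃ q : ℕ, q * (H + k * δ) < S q := by
  obtain ⟨Q, hQ⟩ := eventually_atTop.1 hIS
  obtain ⟨n, hn, hnQ, hnH⟩ := (hfreq.and_eventually ((eventually_ge_atTop (k * Q)).and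
    (eventually_ge_atTop ⌈H / δ + 2 * k⌉₊))).exists
  set q := n / k + 1
  have hqk : n < q * k := by rw [add_mul, one_mul]; exact Nat.lt_div_mul_add hk
  have hqk' : q * k ≤ n + k := by rw [add_mul, one_mul]; gcongr; exact Nat.div_mul_le_self n k
  have hIq := hQ q (Nat.le_succ_of_le ((Nat.le_div_iff_mul_le hk).2 (by rwa [mul_comm])))
  have hIn := hI hqk.le
  refine ⟨q, ?_⟩
  have hkR : (0 : ℝ) < k := by exact_mod_cast hk
  have hnR : H / δ + 2 * k ≤ n := (Nat.le_ceil _).trans (by exact_mod_cast hnH)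
  have hnpos : (0 : ℝ) < n := by linarith [div_nonneg hH hδ.le]
  have hqkR : (q : ℝ) * k ≤ n + k := by exact_mod_cast hqk'
  rw [lt_div_iff₀ hnpos] at hn
  have e1 : (q : ℝ) * (H + k * δ) = q * k * (H / k) + q * k * δ := by field_simp
  have e2 : (q : ℝ) * k * (H / k) ≤ (n + k) * (H / k) := by gcongr
  have e3 : (q : ℝ) * k * δ ≤ (n + k) * δ := by gcongr
  have e4 : H + 2 * k * δ ≤ n * δ := by
    have := mul_le_mul_of_nonneg_right hnR hδ.le
    rwa [add_mul, div_mul_cancel₀ _ hδ.ne'] at this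
  have e5 : (k : ℝ) * (H / k) = H := mul_div_cancel₀ _ hkR.ne'
  linarith

section MaximalErgodic

variable {T : X → X} {G : X → ℝ} {N : ℕ}

theorem birkhoffSum_iterate_eq_sum_fin {M : Type*} [AddCommMonoid M] (f : X → X) (g : X → M)
    (k q : ℕ) (y : X) : birkhoffSum f^[k] g q y = ∑ i : Fin q, g (f^[k * i] y) := by
  simp only [birkhoffSum, ← iterate_mul, Fin.sum_univ_eq_sum_range (fun i => g (f^[k * i] y))]

def birkhoffMax (T : X → X) (G : X → ℝ) (N : ℕ) : X → ℝ :=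
  (Finset.range (N + 1)).sup' Finset.nonempty_range_add_one (birkhoffSum T G)

theorem birkhoffMax_apply (x : X) :
    birkhoffMax T G N x = (Finset.range (N + 1)).sup' Finset.nonempty_range_add_one
      fun q => birkhoffSum T G q x :=
  Finset.sup'_apply _ _ _

theorem birkhoffSum_le_birkhoffMax {q : ℕ} (h : q ≤ N) (x : X) :
    birkhoffSum T G q x ≤ birkhoffMax T G N x := by
  rw [birkhoffMax_apply]
  exact Finset.le_sup' (fun q => birkhoffSum T G q x) (Finset.mem_range_succ_iff.2 h)

theorem birkhoffMax_nonneg (x : X) : 0 ≤ birkhoffMax T G N x :=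
  (birkhoffSum_zero T G x).symm.le.trans (birkhoffSum_le_birkhoffMax N.zero_le x)

theorem birkhoffMax_mono {N' : ℕ} (h : N ≤ N') (x : X) :
    birkhoffMax T G N x ≤ birkhoffMax T G N' x := by
  rw [birkhoffMax_apply]
  exact Finset.sup'_le _ _ fun q hq =>
    birkhoffSum_le_birkhoffMax ((Finset.mem_range_succ_iff.1 hq).trans h) x

theorem birkhoffMax_succ_le {x : X} (h : 0 < birkhoffMax T G (N + 1) x) :
    birkhoffMax T G (N + 1) x ≤ G x + birkhoffMax T G N (T x) := by
  obtain ⟨q, hq, hmax⟩ := Finset.exists_mem_eq_sup' Finset.nonempty_range_add_one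
    fun q => birkhoffSum T G q x
  rw [← birkhoffMax_apply] at hmax
  rw [hmax] at h ⊢
  obtain _ | q := q
  · simp at h
  · rw [birkhoffSum_succ']
    exact add_le_add le_rfl (birkhoffSum_le_birkhoffMax (by simpa using hq) _)

variable [MeasurableSpace X] {μ : Measure X}

theorem measurable_birkhoffMax (hT : Measurable T) (hG : Measurable G) (N : ℕ) :
    Measurable (birkhoffMax T G N) :=
  Finset.measurable_sup' _ fun _ _ =>
    Finset.measurable_sum _ fun k _ => hG.comp (hT.iterate k)

theorem integrable_birkhoffMax (hT : MeasurePreserving T μ μ) (hG : Integrable G μ) (N : ℕ) :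
    Integrable (birkhoffMax T G N) μ :=
  Finset.sup'_induction _ _ (p := fun g => Integrable g μ) (fun _ h₁ _ h₂ => h₁.sup h₂)
    fun _ _ => integrable_finsetSum _ fun k _ => (hT.iterate k).integrable_comp_of_integrable hG

/-- Garsia's argument: on this set `birkhoffMax (N + 1) ≤ G + birkhoffMax N ∘ T`, and `T`
preserves the integral of `birkhoffMax N`. -/
theorem setIntegral_birkhoffMax_pos_nonneg (hT : MeasurePreserving T μ μ) (hGm : Measurable G)
    (hG : Integrable G μ) (N : ℕ) : 0 ≤ ∫ x in {x | 0 < birkhoffMax T G (N + 1) x}, G x ∂μ := by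
  set E := {x | 0 < birkhoffMax T G (N + 1) x}
  have hE : MeasurableSet E :=
    measurableSet_lt measurable_const (measurable_birkhoffMax hT.measurable hGm _)
  have hM := integrable_birkhoffMax hT hG
  have hMT : Integrable (fun x => birkhoffMax T G N (T x)) μ :=
    hT.integrable_comp_of_integrable (hM N)
  have hMT_eq : ∫ x, birkhoffMax T G N (T x) ∂μ = ∫ x, birkhoffMax T G N x ∂μ := by
    rw [← integral_map hT.measurable.aemeasurable (by rw [hT.map_eq]; exact
      (measurable_birkhoffMax hT.measurable hGm N).aestronglyMeasurable), hT.map_eq]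
  calc 0 ≤ ∫ x, birkhoffMax T G (N + 1) x ∂μ - ∫ x, birkhoffMax T G N (T x) ∂μ := by
        rw [hMT_eq, sub_nonneg]
        exact integral_mono (hM N) (hM _) fun x => birkhoffMax_mono N.le_succ x
    _ ≤ ∫ x in E, birkhoffMax T G (N + 1) x ∂μ - ∫ x in E, birkhoffMax T G N (T x) ∂μ := by
        rw [setIntegral_eq_integral_of_forall_compl_eq_zero (s := E) fun x hx =>
          (not_lt.1 hx).antisymm (birkhoffMax_nonneg x)]
        exact sub_le_sub_left (setIntegral_le_integral hMT
          (.of_forall fun x => birkhoffMax_nonneg _)) _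
    _ = ∫ x in E, (birkhoffMax T G (N + 1) x - birkhoffMax T G N (T x)) ∂μ :=
        (integral_sub (hM _).integrableOn hMT.integrableOn).symm
    _ ≤ ∫ x in E, G x ∂μ :=
        setIntegral_mono_on ((hM _).sub hMT).integrableOn hG.integrableOn hE fun x hx => by
          linarith [birkhoffMax_succ_le (T := T) (G := G) (N := N) hx]

/-- The maximal ergodic lemma. -/
theorem integral_nonneg_of_ae_exists_birkhoffSum_pos (hT : MeasurePreserving T μ μ)
    (hGm : Measurable G) (hG : Integrable G μ) (h : ∀ᵐ x ∂μ, ∃ q, 0 < birkhoffSum T G q x) :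
    0 ≤ ∫ x, G x ∂μ := by
  set E : ℕ → Set X := fun N => {x | 0 < birkhoffMax T G (N + 1) x}
  have hE : ∀ N, MeasurableSet (E N) := fun N =>
    measurableSet_lt measurable_const (measurable_birkhoffMax hT.measurable hGm _)
  have hmono : Monotone E := fun N N' h x hx =>
    hx.trans_le (birkhoffMax_mono (Nat.succ_le_succ h) x)
  have hcover : μ.restrict (⋃ N, E N) = μ := by
    refine Measure.restrict_eq_self_of_ae_mem (h.mono fun x ⟨q, hq⟩ => mem_iUnion.2 ⟨q, ?_⟩)
    exact hq.trans_le (birkhoffSum_le_birkhoffMax q.le_succ x)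
  have hlim := tendsto_setIntegral_of_monotone (f := G) (μ := μ) hE hmono
    (by rw [IntegrableOn, hcover]; exact hG)
  rw [hcover] at hlim
  exact ge_of_tendsto hlim (.of_forall (setIntegral_birkhoffMax_pos_nonneg hT hGm hG))

end MaximalErgodic

section Kac

variable [MeasurableSpace X] {μ : Measure X} {f : X → X}

def noReturnSet (f : X → X) (A : Set X) (t : ℕ) : Set X :=
  {x | x ∈ A ∧ ∀ k, 1 ≤ k → k ≤ t → f^[k] x ∉ A}

theorem measurableSet_noReturnSet (hf : Measurable f) {A : Set X} (hA : MeasurableSet A)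
    (t : ℕ) : MeasurableSet (noReturnSet f A t) := by
  have : noReturnSet f A t = A ∩ ⋂ (k) (_ : 1 ≤ k) (_ : k ≤ t), f^[k] ⁻¹' Aᶜ := by
    ext x
    simp [noReturnSet]
  rw [this]
  exact hA.inter (.iInter fun k => .iInter fun _ => .iInter fun _ => hf.iterate k hA.compl)

/-- Kac-type bound: the preimages of `noReturnSet f A t` under `f^[i]`, `i ≤ t`, are pairwise
disjoint and have the same measure. -/
theorem MeasureTheory.MeasurePreserving.measure_noReturnSet_le [IsProbabilityMeasure μ]
    (hf : MeasurePreserving f μ μ) {A : Set X} (hA : MeasurableSet A) (t : ℕ) :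
    μ (noReturnSet f A t) ≤ ((t : ℝ≥0∞) + 1)⁻¹ := by
  set B := noReturnSet f A t
  have hB := measurableSet_noReturnSet hf.measurable hA t
  have hdisj : PairwiseDisjoint ↑(Finset.range (t + 1)) fun i => f^[i] ⁻¹' B := by
    intro i hi j hj hij
    wlog hlt : i < j generalizing i j
    · exact (this hj hi hij.symm (hij.lt_or_gt.resolve_left hlt)).symm
    refine Set.disjoint_left.2 fun x (hxi : f^[i] x ∈ B) (hxj : f^[j] x ∈ B) => ?_
    have hji : f^[j] x = f^[j - i] (f^[i] x) := by rw [← iterate_add_apply]; congr 1; omega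
    simp only [Finset.coe_range, mem_Iio] at hj
    exact hxi.2 (j - i) (by omega) (by omega) (hji ▸ hxj.1)
  have hsum : ∑ i ∈ Finset.range (t + 1), μ (f^[i] ⁻¹' B) ≤ 1 := by
    rw [← measure_biUnion_finset hdisj fun i _ => hf.measurable.iterate i hB]
    exact prob_le_one
  rw [Finset.sum_congr rfl fun i _ => (hf.iterate i).measure_preimage hB.nullMeasurableSet,
    Finset.sum_const, Finset.card_range, nsmul_eq_mul] at hsum
  rw [ENNReal.le_inv_iff_mul_le, mul_comm]
  exact_mod_cast hsum

theorem MeasureTheory.MeasurePreserving.measure_noReturnSet_floor_le [IsProbabilityMeasure μ]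
    (hf : MeasurePreserving f μ μ) {A : Set X} (hA : MeasurableSet A) {r : ℝ} (hr : 0 < r) :
    μ (noReturnSet f A ⌊r / (μ A).toReal⌋₊) ≤ ENNReal.ofReal r⁻¹ * μ A := by
  rcases eq_or_ne (μ A) 0 with h0 | h0
  · exact (measure_mono_null (fun x hx => hx.1) h0).trans_le zero_le
  have ha : 0 < (μ A).toReal := ENNReal.toReal_pos h0 (measure_ne_top μ A)
  calc μ (noReturnSet f A ⌊r / (μ A).toReal⌋₊) ≤ ((⌊r / (μ A).toReal⌋₊ : ℝ≥0∞) + 1)⁻¹ :=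
        hf.measure_noReturnSet_le hA _
    _ = ENNReal.ofReal ((⌊r / (μ A).toReal⌋₊ + 1 : ℝ))⁻¹ := by
        rw [ENNReal.ofReal_inv_of_pos (by positivity)]; norm_cast
    _ ≤ ENNReal.ofReal (r / (μ A).toReal)⁻¹ :=
        ENNReal.ofReal_le_ofReal (inv_anti₀ (by positivity) (Nat.lt_floor_add_one _).le)
    _ = ENNReal.ofReal r⁻¹ * μ A := by
        rw [inv_div, div_eq_inv_mul, ENNReal.ofReal_mul (inv_nonneg.2 hr.le),
          ENNReal.ofReal_toReal (measure_ne_top μ A)]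

end Kac

def partCell {m : ℕ} (P : Fin m → Set X) (y : X) : Set X := ⋃ (i) (_ : y ∈ P i), P i

/-- `Q^{(n)}(x)`: the atom of `refinePart f P n` containing `x`. -/
def dynCell {m : ℕ} (f : X → X) (P : Fin m → Set X) (n : ℕ) (x : X) : Set X :=
  ⋂ j : Fin n, f^[j] ⁻¹' partCell P (f^[j] x)

section Cells

variable {m n : ℕ} {P : Fin m → Set X} {f : X → X} {x : X}

theorem partCell_eq (hd : Pairwise (Disjoint on P)) {y : X} {i : Fin m} (hi : y ∈ P i) :
    partCell P y = P i := by
  refine (iUnion₂_subset fun i' hi' => ?_).antisymm (subset_iUnion₂ (s := fun i _ => P i) i hi)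
  by_contra h
  exact Set.not_disjoint_iff.2 ⟨y, hi', hi⟩ (hd fun e => h (e ▸ subset_rfl))

@[simp]

theorem mem_refinePart {s : Fin n → Fin m} {y : X} :
    y ∈ refinePart f P n s ↔ ∀ j : Fin n, f^[j] y ∈ P (s j) := by
  simp [refinePart]

theorem exists_mem_refinePart (hcov : ⋃ i, P i = univ) (n : ℕ) (x : X) :
    ∃ s, x ∈ refinePart f P n s := by
  choose i hi using fun y => Set.iUnion_eq_univ_iff.1 hcov y
  exact ⟨fun j => i (f^[j] x), mem_refinePart.2 fun j => hi _⟩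

theorem dynCell_eq_refinePart (hd : Pairwise (Disjoint on P)) {s : Fin n → Fin m}
    (hx : x ∈ refinePart f P n s) : dynCell f P n x = refinePart f P n s :=
  iInter_congr fun j => by rw [partCell_eq hd (mem_refinePart.1 hx j)]

theorem exists_dynCell_eq_refinePart (hd : Pairwise (Disjoint on P)) (hcov : ⋃ i, P i = univ)
    (n : ℕ) (x : X) : ∃ s, x ∈ refinePart f P n s ∧ dynCell f P n x = refinePart f P n s :=
  (exists_mem_refinePart hcov n x).imp fun _ hs => ⟨hs, dynCell_eq_refinePart hd hs⟩

theorem dynCell_anti {n' : ℕ} (h : n ≤ n') : dynCell f P n' x ⊆ dynCell f P n x := by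
  simp only [dynCell, subset_iInter_iff]
  exact fun j => iInter_subset_of_subset ⟨j, j.2.trans_le h⟩ subset_rfl

theorem dynCell_add_subset (a b : ℕ) :
    dynCell f P (a + b) x ⊆ f^[a] ⁻¹' dynCell f P b (f^[a] x) := by
  simp only [dynCell, preimage_iInter, subset_iInter_iff]
  intro j
  refine iInter_subset_of_subset ⟨j + a, by omega⟩ fun y hy => ?_
  simpa [← iterate_add_apply] using hy

theorem dynCell_subset_dynBall [PseudoMetricSpace X] {ε : ℝ}
    (hP : ∀ i, ∀ y ∈ P i, ∀ z ∈ P i, dist y z < ε) : dynCell f P n x ⊆ dynBall f x n ε := by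
  intro y hy j hj
  obtain ⟨i, hxi, hyi⟩ := mem_iUnion₂.1 (mem_iInter.1 hy ⟨j, hj⟩)
  exact hP i _ hxi _ hyi

theorem pairwise_disjoint_refinePart (hd : Pairwise (Disjoint on P)) :
    Pairwise (Disjoint on refinePart f P n) := by
  intro s t hst
  obtain ⟨j, hj⟩ := Function.ne_iff.1 hst
  exact Set.disjoint_left.2 fun y hs ht =>
    Set.disjoint_left.1 (hd hj) (mem_refinePart.1 hs j) (mem_refinePart.1 ht j)

theorem dynCell_iterate_eq_refinePart_block (hd : Pairwise (Disjoint on P)) {q k : ℕ} {y : X}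
    {s : Fin (q * k) → Fin m} (hy : y ∈ refinePart f P (q * k) s) (i : Fin q) :
    dynCell f P k (f^[k * i] y) = refinePart f P k fun j => s (finProdFinEquiv (i, j)) := by
  refine dynCell_eq_refinePart hd (mem_refinePart.2 fun j => ?_)
  rw [← iterate_add_apply]
  exact mem_refinePart.1 hy (finProdFinEquiv (i, j))

end Cells

theorem exists_isFinPartition_forall_dist_lt [PseudoMetricSpace X] [CompactSpace X]
    [MeasurableSpace X] [OpensMeasurableSpace X] {ε : ℝ} (hε : 0 < ε) :
    ∃ (m : ℕ) (P : Fin m → Set X), IsFinPartition P ∧ ∀ i, ∀ x ∈ P i, ∀ y ∈ P i, dist x y < ε := by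
  obtain ⟨t, -, ht, hcov⟩ := finite_cover_balls_of_compact (isCompact_univ (X := X)) (half_pos hε)
  obtain ⟨m, c, rfl⟩ := ht.fin_embedding
  refine ⟨m, disjointed fun i => ball (c i) (ε / 2), ⟨fun i => ?_, disjoint_disjointed _, ?_⟩, ?_⟩
  · exact disjointedRec (fun _ _ ht => ht.diff measurableSet_ball) measurableSet_ball
  · simpa [iUnion_disjointed, univ_subset_iff] using hcov
  · intro i x hx y hy
    have hx' := disjointed_subset _ i hx
    have hy' := disjointed_subset _ i hy
    rw [mem_ball] at hx' hy'
    linarith [dist_triangle_right x y (c i)]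

section Measure

variable [MeasurableSpace X] {μ : Measure X} {m n : ℕ} {P : Fin m → Set X} {f : X → X}

theorem measurableSet_refinePart (hP : IsFinPartition P) (hf : Measurable f)
    (s : Fin n → Fin m) : MeasurableSet (refinePart f P n s) :=
  .iInter fun j => hf.iterate j (hP.1 (s j))

theorem sum_measure_refinePart [IsProbabilityMeasure μ] (hP : IsFinPartition P)
    (hf : Measurable f) (n : ℕ) : ∑ s, μ (refinePart f P n s) = 1 := by
  rw [← tsum_fintype (L := .unconditional _), ← measure_iUnion
    (pairwise_disjoint_refinePart hP.2.1) (measurableSet_refinePart hP hf),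
    iUnion_eq_univ_iff.2 (exists_mem_refinePart hP.2.2 n), measure_univ]

theorem measure_dynCell_le_iterate (hP : IsFinPartition P) (hf : MeasurePreserving f μ μ)
    (a b : ℕ) (x : X) : μ (dynCell f P (a + b) x) ≤ μ (dynCell f P b (f^[a] x)) := by
  obtain ⟨s, -, hs⟩ := exists_dynCell_eq_refinePart (f := f) hP.2.1 hP.2.2 b (f^[a] x)
  calc μ (dynCell f P (a + b) x) ≤ μ (f^[a] ⁻¹' dynCell f P b (f^[a] x)) :=
        measure_mono (dynCell_add_subset a b)
    _ = μ (dynCell f P b (f^[a] x)) := by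
        rw [hs, (hf.iterate a).measure_preimage
          (measurableSet_refinePart hP hf.measurable s).nullMeasurableSet]

theorem ae_measure_dynCell_ne_zero (hP : IsFinPartition P) :
    ∀ᵐ x ∂μ, ∀ n, μ (dynCell f P n x) ≠ 0 := by
  rw [ae_all_iff]
  intro n
  have hnull : μ (⋃ (s) (_ : μ (refinePart f P n s) = 0), refinePart f P n s) = 0 :=
    measure_iUnion_null fun s => measure_iUnion_null fun hs => hs
  filter_upwards [measure_eq_zero_iff_ae_notMem.1 hnull] with x hx h0
  obtain ⟨s, hs, hcell⟩ := exists_dynCell_eq_refinePart (f := f) hP.2.1 hP.2.2 n x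
  exact hx (mem_iUnion₂.2 ⟨s, hcell ▸ h0, hs⟩)

theorem ae_measure_dynCell_iterate_ne_zero (hP : IsFinPartition P)
    (hf : MeasurePreserving f μ μ) : ∀ᵐ x ∂μ, ∀ j n, μ (dynCell f P n (f^[j] x)) ≠ 0 := by
  rw [ae_all_iff]
  exact fun j => (hf.iterate j).quasiMeasurePreserving.ae (ae_measure_dynCell_ne_zero hP)

theorem ae_exists_iterate_mem_dynCell [IsFiniteMeasure μ] (hP : IsFinPartition P)
    (hf : MeasurePreserving f μ μ) : ∀ᵐ x ∂μ, ∀ n, ∃ k, 1 ≤ k ∧ f^[k] x ∈ dynCell f P n x := by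
  rw [ae_all_iff]
  intro n
  have hrec : ∀ᵐ x ∂μ, ∀ s, x ∈ refinePart f P n s → ∃ᶠ k in atTop, f^[k] x ∈ refinePart f P n s :=
    ae_all_iff.2 fun s => hf.conservative.ae_mem_imp_frequently_image_mem
      (measurableSet_refinePart hP hf.measurable s).nullMeasurableSet
  filter_upwards [hrec] with x hx
  obtain ⟨s, hs, hcell⟩ := exists_dynCell_eq_refinePart (f := f) hP.2.1 hP.2.2 n x
  obtain ⟨k, hk, hk1⟩ := ((hx s hs).and_eventually (eventually_ge_atTop 1)).exists
  exact ⟨k, hk1, hcell ▸ hk⟩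

end Measure

section Information

variable [MeasurableSpace X] {μ : Measure X} {m n : ℕ} {P : Fin m → Set X} {f : X → X}

def cellInfo (μ : Measure X) (f : X → X) (P : Fin m → Set X) (n : ℕ) (x : X) : ℝ :=
  -Real.log (μ (dynCell f P n x)).toReal

def upperInfoRate (μ : Measure X) (f : X → X) (P : Fin m → Set X) (x : X) : ℝ≥0∞ :=
  atTop.limsup fun n : ℕ => ENNReal.ofReal (cellInfo μ f P n x / n)

theorem cellInfo_eq_sum_indicator (hP : IsFinPartition P) (n : ℕ) :
    cellInfo μ f P n = fun x => ∑ s, (refinePart f P n s).indicator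
      (fun _ => -Real.log (μ (refinePart f P n s)).toReal) x := by
  classical
  funext x
  obtain ⟨s, hs, hcell⟩ := exists_dynCell_eq_refinePart (f := f) hP.2.1 hP.2.2 n x
  rw [Finset.sum_eq_single s (fun t _ hts => indicator_of_notMem (fun ht =>
    Set.disjoint_left.1 (pairwise_disjoint_refinePart hP.2.1 hts) ht hs) _) (by simp),
    indicator_of_mem hs, cellInfo, hcell]

theorem measurable_cellInfo (hP : IsFinPartition P) (hf : Measurable f) (n : ℕ) :
    Measurable (cellInfo μ f P n) := by
  rw [cellInfo_eq_sum_indicator hP]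
  exact Finset.measurable_sum _ fun s _ =>
    measurable_const.indicator (measurableSet_refinePart hP hf s)

theorem integrable_cellInfo [IsFiniteMeasure μ] (hP : IsFinPartition P) (hf : Measurable f)
    (n : ℕ) : Integrable (cellInfo μ f P n) μ := by
  rw [cellInfo_eq_sum_indicator hP]
  exact integrable_finsetSum _ fun s _ =>
    (integrable_const _).indicator (measurableSet_refinePart hP hf s)

theorem integral_cellInfo [IsFiniteMeasure μ] (hP : IsFinPartition P) (hf : Measurable f)
    (n : ℕ) : ∫ x, cellInfo μ f P n x ∂μ = entH μ (refinePart f P n) := by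
  rw [cellInfo_eq_sum_indicator hP, integral_finsetSum _ fun s _ =>
    (integrable_const _).indicator (measurableSet_refinePart hP hf s)]
  simp [integral_indicator_const _ (measurableSet_refinePart hP hf _), entH, measureReal_def]

theorem entH_nonneg [IsProbabilityMeasure μ] {ι : Type*} [Fintype ι] (Q : ι → Set X) :
    0 ≤ entH μ Q :=
  neg_nonneg.2 (Finset.sum_nonpos fun _ _ =>
    mul_nonpos_of_nonneg_of_nonpos ENNReal.toReal_nonneg
      (Real.log_nonpos ENNReal.toReal_nonneg measureReal_le_one))

theorem cellInfo_le_of_measure_le [IsFiniteMeasure μ] {A : Set X} {x : X} (h0 : μ A ≠ 0)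
    (h : μ A ≤ μ (dynCell f P n x)) : cellInfo μ f P n x ≤ -Real.log (μ A).toReal :=
  neg_le_neg (Real.log_le_log (ENNReal.toReal_pos h0 (measure_ne_top μ A))
    (ENNReal.toReal_mono (measure_ne_top μ _) h))

theorem cellInfo_mono [IsFiniteMeasure μ] {x : X} {n' : ℕ} (h : n ≤ n')
    (h0 : μ (dynCell f P n' x) ≠ 0) : cellInfo μ f P n x ≤ cellInfo μ f P n' x :=
  cellInfo_le_of_measure_le h0 (measure_mono (dynCell_anti h))

theorem cellInfo_apply_le_succ [IsFiniteMeasure μ] (hP : IsFinPartition P)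
    (hf : MeasurePreserving f μ μ) {x : X} (h0 : μ (dynCell f P (n + 1) x) ≠ 0) :
    cellInfo μ f P n (f x) ≤ cellInfo μ f P (n + 1) x :=
  cellInfo_le_of_measure_le h0 (by simpa [add_comm] using measure_dynCell_le_iterate hP hf 1 n x)

theorem measurable_upperInfoRate (hP : IsFinPartition P) (hf : Measurable f) :
    Measurable (upperInfoRate μ f P) :=
  .limsup fun n => ((measurable_cellInfo hP hf n).div_const _).ennreal_ofReal

end Information

section ReturnToCells

variable [MeasurableSpace X] {μ : Measure X} [IsProbabilityMeasure μ] {m : ℕ}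
  {P : Fin m → Set X} {f : X → X}

theorem ae_eventually_exists_iterate_mem_dynCell_le (hP : IsFinPartition P)
    (hf : MeasurePreserving f μ μ) {δ : ℝ} (hδ : 0 < δ) :
    ∀ᵐ x ∂μ, ∀ᶠ n : ℕ in atTop, ∃ k : ℕ, 1 ≤ k ∧
      (k : ℝ) ≤ Real.exp (n * δ) / (μ (dynCell f P n x)).toReal ∧ f^[k] x ∈ dynCell f P n x := by
  set t : (n : ℕ) → (Fin n → Fin m) → ℕ := fun n s =>
    ⌊Real.exp (n * δ) / (μ (refinePart f P n s)).toReal⌋₊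
  have hbad : ∀ n, μ (⋃ s, noReturnSet f (refinePart f P n s) (t n s))
      ≤ ENNReal.ofReal (Real.exp (-(n * δ))) := fun n =>
    calc _ ≤ ∑ s, ENNReal.ofReal (Real.exp (n * δ))⁻¹ * μ (refinePart f P n s) :=
          (measure_iUnion_fintype_le _ _).trans (Finset.sum_le_sum fun s _ =>
            hf.measure_noReturnSet_floor_le (measurableSet_refinePart hP hf.measurable s)
              (Real.exp_pos _))
      _ = _ := by
          rw [← Finset.mul_sum, sum_measure_refinePart hP hf.measurable, mul_one, Real.exp_neg]
  filter_upwards [ae_eventually_notMem_of_measure_le_exp hδ hbad] with x hx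
  filter_upwards [hx] with n hn
  obtain ⟨s, hs, hcell⟩ := exists_dynCell_eq_refinePart (f := f) hP.2.1 hP.2.2 n x
  obtain ⟨k, hk1, hkt, hk⟩ : ∃ k, 1 ≤ k ∧ k ≤ t n s ∧ f^[k] x ∈ refinePart f P n s := by
    by_contra! h
    exact hn (mem_iUnion.2 ⟨s, hs, h⟩)
  rw [hcell]
  exact ⟨k, hk1, (Nat.cast_le.2 hkt).trans (Nat.floor_le (by positivity)), hk⟩

end ReturnToCells

section Barron

variable [MeasurableSpace X] {μ : Measure X} [IsProbabilityMeasure μ] {m q k : ℕ}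
  {P : Fin m → Set X} {f : X → X}

theorem sum_prod_measure_refinePart_block (hP : IsFinPartition P) (hf : Measurable f) :
    ∑ s : Fin (q * k) → Fin m, ∏ i : Fin q,
      μ (refinePart f P k fun j => s (finProdFinEquiv (i, j))) = 1 := by
  let e : (Fin q → Fin k → Fin m) ≃ (Fin (q * k) → Fin m) :=
    (Equiv.curry _ _ _).symm.trans (finProdFinEquiv.arrowCongr (Equiv.refl _))
  rw [← e.sum_comp]
  simp only [e, Equiv.trans_apply, Equiv.arrowCongr_apply, comp_apply, Equiv.symm_apply_apply,
    Equiv.refl_apply, Equiv.curry_symm_apply, uncurry_apply_pair]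
  exact (Fintype.sum_pow _ q).symm.trans (by rw [sum_measure_refinePart (μ := μ) hP hf k, one_pow])

/-- Barron's lemma. The cells violating the bound have total measure at most `exp (-q k δ)`,
since the block products sum to `1`; conclude by Borel–Cantelli. -/
theorem ae_eventually_mul_prod_measure_dynCell_le (hP : IsFinPartition P) (hf : Measurable f)
    (hk : 0 < k) {δ : ℝ} (hδ : 0 < δ) :
    ∀ᵐ y ∂μ, ∀ᶠ q : ℕ in atTop, ENNReal.ofReal (Real.exp (-(q * (k * δ)))) *
      ∏ i : Fin q, μ (dynCell f P k (f^[k * i] y)) ≤ μ (dynCell f P (q * k) y) := by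
  set w : (q : ℕ) → (Fin (q * k) → Fin m) → ℝ≥0∞ := fun q s =>
    ENNReal.ofReal (Real.exp (-(q * (k * δ)))) *
      ∏ i : Fin q, μ (refinePart f P k fun j => s (finProdFinEquiv (i, j)))
  have hbad : ∀ q : ℕ, μ (⋃ (s) (_ : μ (refinePart f P (q * k) s) < w q s),
      refinePart f P (q * k) s) ≤ ENNReal.ofReal (Real.exp (-(q * (k * δ)))) := fun q => by
    refine (measure_iUnion_measure_lt_le _ _).trans_eq ?_
    rw [← Finset.mul_sum, sum_prod_measure_refinePart_block hP hf, mul_one]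
  filter_upwards [ae_eventually_notMem_of_measure_le_exp (by positivity) hbad] with y hy
  filter_upwards [hy] with q hq
  obtain ⟨s, hs, hcell⟩ := exists_dynCell_eq_refinePart (f := f) hP.2.1 hP.2.2 (q * k) y
  simp only [mem_iUnion, not_exists] at hq
  simp only [hcell, dynCell_iterate_eq_refinePart_block hP.2.1 hs]
  exact not_lt.1 fun h => hq s h hs

end Barron

section ShannonMcMillanBreiman

variable [MeasurableSpace X] {μ : Measure X} [IsProbabilityMeasure μ] {m k : ℕ}
  {P : Fin m → Set X} {f : X → X}

theorem ae_eventually_cellInfo_le_add_birkhoffSum (hP : IsFinPartition P)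
    (hf : MeasurePreserving f μ μ) (hk : 0 < k) {δ : ℝ} (hδ : 0 < δ) :
    ∀ᵐ y ∂μ, ∀ᶠ q : ℕ in atTop,
      cellInfo μ f P (q * k) y ≤ q * (k * δ) + birkhoffSum f^[k] (cellInfo μ f P k) q y := by
  filter_upwards [ae_measure_dynCell_iterate_ne_zero hP hf,
    ae_eventually_mul_prod_measure_dynCell_le hP hf.measurable hk hδ] with y h0 hy
  filter_upwards [hy] with q hq
  have hblock : ∀ i : Fin q, 0 < (μ (dynCell f P k (f^[k * i] y))).toReal := fun i =>
    ENNReal.toReal_pos (h0 _ _) (measure_ne_top _ _)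
  have hlog := Real.log_le_log (by
    rw [ENNReal.toReal_mul, ENNReal.toReal_prod, ENNReal.toReal_ofReal (Real.exp_nonneg _)]
    exact mul_pos (Real.exp_pos _) (Finset.prod_pos fun i _ => hblock i))
    (ENNReal.toReal_mono (measure_ne_top _ _) hq)
  rw [ENNReal.toReal_mul, ENNReal.toReal_prod, ENNReal.toReal_ofReal (Real.exp_nonneg _),
    Real.log_mul (Real.exp_pos _).ne' (Finset.prod_pos fun i _ => hblock i).ne', Real.log_exp,
    Real.log_prod fun i _ => (hblock i).ne'] at hlog
  rw [birkhoffSum_iterate_eq_sum_fin]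
  simp only [cellInfo, Finset.sum_neg_distrib]
  linarith

theorem ae_upperInfoRate_apply_le (hP : IsFinPartition P) (hf : MeasurePreserving f μ μ) :
    ∀ᵐ x ∂μ, upperInfoRate μ f P (f x) ≤ upperInfoRate μ f P x := by
  filter_upwards [ae_measure_dynCell_ne_zero hP] with x h0
  exact limsup_ofReal_div_le_of_le_succ fun n => cellInfo_apply_le_succ hP hf (h0 _)

/-- The upper half of the Shannon–McMillan–Breiman theorem, up to `3 δ`. By ergodicity the
subinvariant function `upperInfoRate` lies a.e. on one side of the bound. Were it a.e. above,
Barron's lemma would make some Birkhoff sum of `cellInfo k - (H_k + k δ)` under `f^[k]` positive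
at a.e. point, contradicting the maximal ergodic lemma since that function has integral `-k δ`. -/
theorem ae_upperInfoRate_le (hf : Ergodic f μ) (hP : IsFinPartition P) (hk : 0 < k) {δ : ℝ}
    (hδ : 0 < δ) :
    ∀ᵐ x ∂μ, upperInfoRate μ f P x ≤ ENNReal.ofReal (entH μ (refinePart f P k) / k + 3 * δ) := by
  have hfm := hf.toMeasurePreserving
  refine (hf.ae_le_or_ae_lt_of_ae_comp_le (measurable_upperInfoRate hP hfm.measurable)
    (ae_upperInfoRate_apply_le hP hfm) _).resolve_right fun hlt => ?_
  set G : X → ℝ := cellInfo μ f P k - fun _ => entH μ (refinePart f P k) + k * δ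
  have hpos : ∀ᵐ y ∂μ, ∃ q, 0 < birkhoffSum f^[k] G q y := by
    filter_upwards [hlt, ae_measure_dynCell_ne_zero hP,
      ae_eventually_cellInfo_le_add_birkhoffSum hP hfm hk hδ] with y hy h0 hIS
    have hfreq : ∃ᶠ n : ℕ in atTop,
        entH μ (refinePart f P k) / k + 3 * δ < cellInfo μ f P n y / n :=
      (frequently_lt_of_lt_limsup (by isBoundedDefault) hy).mono fun n hn =>
        (ENNReal.ofReal_lt_ofReal_iff'.1 hn).1
    obtain ⟨q, hq⟩ := exists_mul_lt_of_frequently_lt_div hk hδ (entH_nonneg _)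
      (fun n n' h => cellInfo_mono h (h0 n')) hIS hfreq
    refine ⟨q, ?_⟩
    simpa [G, birkhoffSum_sub, birkhoffSum, mul_add] using hq
  have hint := integral_nonneg_of_ae_exists_birkhoffSum_pos (hfm.iterate k)
    ((measurable_cellInfo hP hfm.measurable k).sub measurable_const)
    ((integrable_cellInfo hP hfm.measurable k).sub (integrable_const _)) hpos
  rw [integral_sub' (integrable_cellInfo hP hfm.measurable k) (integrable_const _),
    integral_cellInfo hP hfm.measurable k, integral_const] at hint
  simp only [probReal_univ, one_smul] at hint
  linarith [mul_pos (Nat.cast_pos.2 hk : (0 : ℝ) < k) hδ]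

theorem ae_upperInfoRate_le_partKS (hf : Ergodic f μ) (hP : IsFinPartition P) :
    ∀ᵐ x ∂μ, upperInfoRate μ f P x ≤ partKS μ f P := by
  have hk : ∀ k ∈ Ioi 0, ∀ᵐ x ∂μ,
      upperInfoRate μ f P x ≤ ENNReal.ofReal (entH μ (refinePart f P k) / k) := fun k hk =>
    ae_le_of_forall_pos_ae_le_add fun δ hδ => by
      filter_upwards [ae_upperInfoRate_le hf hP hk (by positivity : 0 < δ / 3)] with x hx
      rw [← ENNReal.ofReal_add (div_nonneg (entH_nonneg _) k.cast_nonneg) hδ.le]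
      convert hx using 3
      ring
  filter_upwards [(ae_ball_iff (to_countable _)).2 hk] with x hx
  exact le_liminf_of_le (by isBoundedDefault) ((eventually_gt_atTop 0).mono hx)

end ShannonMcMillanBreiman

theorem log_retTime_le [PseudoMetricSpace X] {f : X → X} {x : X} {n k : ℕ} {ε : ℝ} (hk : 1 ≤ k)
    (hkx : f^[k] x ∈ dynBall f x n ε) : Real.log (retTime f x n ε) ≤ Real.log k := by
  have hmem : k ∈ {k | 1 ≤ k ∧ f^[k] x ∈ dynBall f x n ε} := ⟨hk, hkx⟩
  exact Real.log_le_log (Nat.cast_pos.2 (Nat.sInf_mem ⟨k, hmem⟩).1)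
    (Nat.cast_le.2 (Nat.sInf_le hmem))

theorem ae_recRateSup_le_upperInfoRate [PseudoMetricSpace X] [MeasurableSpace X] {μ : Measure X}
    [IsProbabilityMeasure μ] {m : ℕ} {P : Fin m → Set X} {f : X → X} (hP : IsFinPartition P)
    (hf : MeasurePreserving f μ μ) {ε : ℝ} (hPε : ∀ i, ∀ y ∈ P i, ∀ z ∈ P i, dist y z < ε) :
    ∀ᵐ x ∂μ, recRateSup f x ε ≤ upperInfoRate μ f P x := by
  refine ae_le_of_forall_pos_ae_le_add fun δ hδ => ?_
  filter_upwards [ae_eventually_exists_iterate_mem_dynCell_le hP hf hδ] with x hx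
  rw [upperInfoRate, ← limsup_add_const _ _ _ (by isBoundedDefault) (by isBoundedDefault)]
  refine limsup_le_limsup ((hx.and (eventually_gt_atTop 0)).mono
    fun n ⟨⟨k, hk1, hkμ, hk⟩, hn⟩ => ?_)
  have hμ : 0 < (μ (dynCell f P n x)).toReal := by
    refine ENNReal.toReal_nonneg.lt_of_ne fun h0 => ?_
    rw [← h0, div_zero] at hkμ
    exact absurd hkμ (not_le.2 (by exact_mod_cast hk1))
  have hlog : Real.log (retTime f x n ε) ≤ n * δ + cellInfo μ f P n x :=
    calc Real.log (retTime f x n ε) ≤ Real.log k :=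
          log_retTime_le hk1 (dynCell_subset_dynBall hPε hk)
      _ ≤ Real.log (Real.exp (n * δ) / (μ (dynCell f P n x)).toReal) :=
          Real.log_le_log (by exact_mod_cast hk1) hkμ
      _ = n * δ + cellInfo μ f P n x := by
          rw [Real.log_div (Real.exp_pos _).ne' hμ.ne', Real.log_exp, cellInfo, sub_eq_add_neg]
  have hn : (0 : ℝ) < n := Nat.cast_pos.2 hn
  refine (ENNReal.ofReal_le_ofReal ?_).trans (ENNReal.ofReal_add_le)
  rw [div_add' _ _ _ hn.ne', div_le_div_iff_of_pos_right hn]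
  linarith

theorem partKS_le_metricEntropy [MeasurableSpace X] {μ : Measure X} {f : X → X} {m : ℕ}
    {P : Fin m → Set X} (hP : IsFinPartition P) : partKS μ f P ≤ metricEntropy μ f :=
  le_iSup₂_of_le m P (le_iSup_of_le hP le_rfl)

end

theorem stmt_1_general {X : Type*} [MetricSpace X] [CompactSpace X] [MeasurableSpace X] [BorelSpace X]
    (f : X → X) (μ : Measure X) [IsProbabilityMeasure μ]
    (herg : Ergodic f μ) :
    ∀ ε > (0:ℝ), ∀ᵐ x ∂μ,
      (∀ n : ℕ, {k : ℕ | 1 ≤ k ∧ f^[k] x ∈ dynBall f x n ε}.Nonempty) ∧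
      recRateSup f x ε ≤ metricEntropy μ f := by
  intro ε hε
  obtain ⟨m, P, hP, hPε⟩ := exists_isFinPartition_forall_dist_lt (X := X) hε
  have hfm := herg.toMeasurePreserving
  filter_upwards [ae_exists_iterate_mem_dynCell hP hfm, ae_recRateSup_le_upperInfoRate hP hfm hPε,
    ae_upperInfoRate_le_partKS herg hP] with x hret hrec hinfo
  refine ⟨fun n => ?_, hrec.trans (hinfo.trans (partKS_le_metricEntropy hP))⟩
  obtain ⟨k, hk1, hk⟩ := hret n
  exact ⟨k, hk1, dynCell_subset_dynBall hPε hk⟩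

/-- For every `ε > 0` and `μ`-a.e. `x`, `limsup_{n→∞} (1/n) log R_n(x,ε) ≤ h_μ(f)`
(in particular the return times `R_n(x,ε)` are finite a.e.). -/
theorem stmt_1 {X : Type*} [MetricSpace X] [CompactSpace X] [MeasurableSpace X] [BorelSpace X]
    (f : X → X) (hf : Continuous f) (μ : Measure X) [IsProbabilityMeasure μ]
    (herg : Ergodic f μ) :
    ∀ ε > (0:ℝ), ∀ᵐ x ∂μ,
      (∀ n : ℕ, {k : ℕ | 1 ≤ k ∧ f^[k] x ∈ dynBall f x n ε}.Nonempty) ∧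
      recRateSup f x ε ≤ metricEntropy μ f :=
  stmt_1_general f μ herg

end
end

section
/- Let (X,d) be a compact metric space, f : X → X a continuous map, Q a finite measurable partition of X, and ε > 0. Let V_ε denote the ε-neighborhood of the boundary ∂Q = ⋃_{Q_i ∈ Q} ∂Q_i, and assume that B(z,ε) ⊆ Q(z) for every z ∉ V_ε, where Q(z) is the element of Q containing z and B(z,ε) is the open ball. Then for every α > 0 there exists γ > 0, depending only on α and the number of elements of Q, such that for every n ≥ 1 and every x ∈ X satisfying Σ_{j=0}^{n−1} 1_{V_ε}(f^j(x)) < γn, the dynamical ball B(x,n,ε) can be covered by at most e^{αn} elements of the partition Q^{(n)} = ⋁_{j=0}^{n−1} f^{-j}Q. -/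
open MeasureTheory Filter Set Metric Topology
open scoped ENNReal NNReal

noncomputable section

universe u

/-!
Outside the `ε`-neighbourhood `V` of `∂P`, the `ε`-ball around `f^j x` lies in a single cell, so
every `y ∈ B(x,n,ε)` has the same `P`-itinerary as `x` at all times `j < n` with `f^j x ∉ V`.
The itineraries of points of `B(x,n,ε)` are therefore free only at the fewer than `γ n` visit
times to `V`, giving at most `m^{γ n} ≤ e^{α n}` cells of `P^{(n)}` for `γ = α / log (m + 2)`
(the `+ 2` keeps the logarithm positive when `m ≤ 1`).
-/

lemma Real.log_natCast_add_two_pos (m : ℕ) : 0 < Real.log (m + 2) :=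
  Real.log_pos (by linarith [(m.cast_nonneg : (0 : ℝ) ≤ m)])

open Finset in
lemma Finset.sum_range_indicator_one_eq_card {X : Type*} (V : Set X) [DecidablePred (· ∈ V)]
    (g : ℕ → X) (n : ℕ) :
    ∑ j ∈ range n, V.indicator (fun _ => (1 : ℝ)) (g j) = #{j : Fin n | g j ∈ V} := by
  rw [← Fin.sum_univ_eq_sum_range (fun j => V.indicator (fun _ => (1 : ℝ)) (g j))]
  simp [Set.indicator_apply]

section agreeOff

open Finset

variable {ι κ : Type*} [Fintype ι] [DecidableEq ι] [Fintype κ]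

def agreeOff (B : Finset ι) (s₀ : ι → κ) : Finset (ι → κ) :=
  Fintype.piFinset fun j => if j ∈ B then univ else {s₀ j}

lemma mem_agreeOff {B : Finset ι} {s₀ s : ι → κ} :
    s ∈ agreeOff B s₀ ↔ ∀ j ∉ B, s j = s₀ j := by
  simp only [agreeOff, Fintype.mem_piFinset]
  refine forall_congr' fun j => ?_
  by_cases hj : j ∈ B <;> simp [hj]

lemma card_agreeOff (B : Finset ι) (s₀ : ι → κ) :
    #(agreeOff B s₀) = Fintype.card κ ^ #B := by
  rw [agreeOff, Fintype.card_piFinset, ← prod_const, ← Fintype.prod_ite_mem B]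
  exact Fintype.prod_congr _ _ fun j => by split_ifs <;> simp

end agreeOff

lemma dynBall_subset_biUnion_agreeOff {X : Type*} [PseudoMetricSpace X] (f : X → X) {m : ℕ}
    {P : Fin m → Set X} (hcover : ⋃ i, P i = univ) {x : X} {n : ℕ} {ε : ℝ}
    (B : Finset (Fin n)) (s₀ : Fin n → Fin m)
    (hs₀ : ∀ j ∉ B, ball (f^[j] x) ε ⊆ P (s₀ j)) :
    dynBall f x n ε ⊆ ⋃ s ∈ agreeOff B s₀, refinePart f P n s := by
  intro y hy
  have hcell : ∀ z, ∃ i, z ∈ P i := fun z => mem_iUnion.mp (hcover ▸ mem_univ z)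
  choose cell hcell using hcell
  let s : Fin n → Fin m := fun j => if j ∈ B then cell (f^[j] y) else s₀ j
  refine mem_biUnion (x := s) (mem_agreeOff.mpr fun j hj => if_neg hj) (mem_iInter.mpr fun j => ?_)
  by_cases hj : j ∈ B
  · simpa [s, hj] using hcell (f^[j] y)
  · simpa [s, hj] using hs₀ j hj (mem_ball'.mpr (hy j j.isLt))

lemma natCast_pow_le_exp_of_lt {m k n : ℕ} {α : ℝ}
    (hk : (k : ℝ) < α / Real.log (m + 2) * n) : (m : ℝ) ^ k ≤ Real.exp (α * n) := by
  have hlog := Real.log_natCast_add_two_pos m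
  calc (m : ℝ) ^ k ≤ ((m : ℝ) + 2) ^ k := by gcongr; linarith
    _ = Real.exp (k * Real.log (m + 2)) := by
      rw [← Real.log_pow, Real.exp_log (by positivity)]
    _ ≤ Real.exp (α * n) := Real.exp_le_exp.mpr <|
      calc (k : ℝ) * Real.log (m + 2) ≤ α / Real.log (m + 2) * n * Real.log (m + 2) := by
            gcongr
        _ = α * n := by field_simp

/-- **Combinatorial covering lemma.** For every `α > 0` there is `γ > 0`, depending only on
`α` and the number `m` of elements of the partition, such that: for any compact metric space,
continuous `f`, finite measurable partition `P` with `m` cells, and `ε > 0` for which the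
`ε`-ball around any point outside the `ε`-neighbourhood `V_ε` of the boundary `∂P` is
contained in the cell of that point, every dynamical ball `B(x,n,ε)` centred at a point whose
first `n` iterates visit `V_ε` fewer than `γ n` times can be covered by at most `e^{α n}`
elements of `P^{(n)}`. -/
theorem stmt_13 (m : ℕ) (α : ℝ) (hα : 0 < α) :
    ∃ γ : ℝ, 0 < γ ∧
      ∀ (X : Type u) [MetricSpace X] [CompactSpace X] [MeasurableSpace X] [BorelSpace X],
        ∀ (f : X → X), Continuous f →
        ∀ P : Fin m → Set X, IsFinPartition P →
        ∀ ε > (0:ℝ),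
          (∀ z : X, z ∉ Metric.thickening ε (⋃ i, frontier (P i)) →
            ∀ i, z ∈ P i → Metric.ball z ε ⊆ P i) →
          ∀ n : ℕ, 1 ≤ n → ∀ x : X,
            (∑ j ∈ Finset.range n,
              Set.indicator (Metric.thickening ε (⋃ i, frontier (P i))) (fun _ => (1:ℝ))
                (f^[j] x)) < γ * n →
            ∃ S : Finset (Fin n → Fin m), (S.card : ℝ) ≤ Real.exp (α * n) ∧
              dynBall f x n ε ⊆ ⋃ s ∈ S, refinePart f P n s := by
  refine ⟨α / Real.log (m + 2), div_pos hα (Real.log_natCast_add_two_pos m), ?_⟩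
  intro X _ _ _ _ f _ P hP ε _ hball n _ x hx
  classical
  have hcell : ∀ z, ∃ i, z ∈ P i := fun z => mem_iUnion.mp (hP.2.2 ▸ mem_univ z)
  choose cell hcell using hcell
  rw [Finset.sum_range_indicator_one_eq_card] at hx
  refine ⟨agreeOff {j : Fin n | f^[j] x ∈ thickening ε (⋃ i, frontier (P i))}
    fun j => cell (f^[j] x), ?_,
    dynBall_subset_biUnion_agreeOff f hP.2.2 _ _ fun j hj => hball _ ?_ _ (hcell _)⟩
  · rw [card_agreeOff, Fintype.card_fin, Nat.cast_pow]
    exact natCast_pow_le_exp_of_lt hx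
  · simpa using hj

end
end

section
/- Let (X,d) be a metric space and f : X → X a map for which there exist constants δ > 0 and 1 < λ ≤ Λ such that λ·d(x,y) ≤ d(f(x),f(y)) ≤ Λ·d(x,y) for all x,y ∈ X with d(x,y) < δ. Then for every x ∈ X, every n ≥ 1 and every ε with 0 < ε < δ, one has the inclusions B(x, εΛ^{−(n−1)}) ⊆ B(x,n,ε) ⊆ B(x, ελ^{−(n−1)}), where B(x,r) denotes the open ball of radius r. -/
/-! While two orbits stay `δ`-close, each step multiplies their distance by a factor between
`λ` and `Λ`, so `λ^j d(x,y) ≤ d(f^j x, f^j y) ≤ Λ^j d(x,y)`. At time `n - 1` the lower bound gives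
the outer inclusion; for the inner one, `d(x,y) < ε Λ^{-(n-1)}` keeps the orbits `ε`-close at all
times `j ≤ n - 1` by induction on `j`. -/

open MeasureTheory Filter Set Metric Topology
open scoped ENNReal NNReal

noncomputable section

section OrbitDistances

variable {X : Type*} [PseudoMetricSpace X] {f : X → X} {δ : ℝ} {x y : X}

theorem dist_iterate_le_pow_mul {L : ℝ} (hL : 0 ≤ L)
    (hf : ∀ x y : X, dist x y < δ → dist (f x) (f y) ≤ L * dist x y) :
    ∀ {k : ℕ}, (∀ j < k, dist (f^[j] x) (f^[j] y) < δ) →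
      dist (f^[k] x) (f^[k] y) ≤ L ^ k * dist x y
  | 0, _ => by simp
  | k + 1, hk => by
    rw [Function.iterate_succ_apply', Function.iterate_succ_apply']
    calc dist (f (f^[k] x)) (f (f^[k] y)) ≤ L * dist (f^[k] x) (f^[k] y) :=
          hf _ _ (hk k k.lt_succ_self)
      _ ≤ L * (L ^ k * dist x y) :=
          mul_le_mul_of_nonneg_left
            (dist_iterate_le_pow_mul hL hf fun j hj => hk j (hj.trans k.lt_succ_self)) hL
      _ = L ^ (k + 1) * dist x y := by ring

theorem pow_mul_le_dist_iterate {c : ℝ} (hc : 0 ≤ c)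
    (hf : ∀ x y : X, dist x y < δ → c * dist x y ≤ dist (f x) (f y)) :
    ∀ {k : ℕ}, (∀ j < k, dist (f^[j] x) (f^[j] y) < δ) →
      c ^ k * dist x y ≤ dist (f^[k] x) (f^[k] y)
  | 0, _ => by simp
  | k + 1, hk => by
    rw [Function.iterate_succ_apply', Function.iterate_succ_apply']
    calc c ^ (k + 1) * dist x y = c * (c ^ k * dist x y) := by ring
      _ ≤ c * dist (f^[k] x) (f^[k] y) :=
          mul_le_mul_of_nonneg_left
            (pow_mul_le_dist_iterate hc hf fun j hj => hk j (hj.trans k.lt_succ_self)) hc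
      _ ≤ dist (f (f^[k] x)) (f (f^[k] y)) := hf _ _ (hk k k.lt_succ_self)

variable {ε : ℝ} {n : ℕ}

theorem ball_subset_dynBall {L : ℝ} (hL : 1 ≤ L)
    (hf : ∀ x y : X, dist x y < δ → dist (f x) (f y) ≤ L * dist x y) (hεδ : ε ≤ δ) :
    ball x (ε / L ^ n) ⊆ dynBall f x (n + 1) ε := by
  intro y hy
  rw [mem_ball', lt_div_iff₀ (by positivity), mul_comm] at hy
  intro j hj
  induction j using Nat.strong_induction_on with
  | _ j ih =>
    calc dist (f^[j] x) (f^[j] y)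
        ≤ L ^ j * dist x y :=
          dist_iterate_le_pow_mul (by linarith) hf fun i hi =>
            (ih i hi (hi.trans hj)).trans_le hεδ
      _ ≤ L ^ n * dist x y :=
          mul_le_mul_of_nonneg_right (pow_le_pow_right₀ hL (Nat.lt_succ_iff.mp hj)) dist_nonneg
      _ < ε := hy

theorem dynBall_subset_ball {c : ℝ} (hc : 0 < c)
    (hf : ∀ x y : X, dist x y < δ → c * dist x y ≤ dist (f x) (f y)) (hεδ : ε ≤ δ) :
    dynBall f x (n + 1) ε ⊆ ball x (ε / c ^ n) := by
  intro y hy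
  rw [mem_ball', lt_div_iff₀ (by positivity), mul_comm]
  calc c ^ n * dist x y
      ≤ dist (f^[n] x) (f^[n] y) :=
        pow_mul_le_dist_iterate hc.le hf fun j hj => (hy j (hj.trans n.lt_succ_self)).trans_le hεδ
    _ < ε := hy n n.lt_succ_self

end OrbitDistances

theorem stmt_15_general {X : Type*} [MetricSpace X] (f : X → X) (δ lam Lam : ℝ)
    (hlam : 1 < lam) (hlamLam : lam ≤ Lam)
    (hexp : ∀ x y : X, dist x y < δ →
      lam * dist x y ≤ dist (f x) (f y) ∧ dist (f x) (f y) ≤ Lam * dist x y) :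
    ∀ (x : X) (n : ℕ), 1 ≤ n → ∀ ε : ℝ, 0 < ε → ε < δ →
      Metric.ball x (ε / Lam ^ (n - 1)) ⊆ dynBall f x n ε ∧
      dynBall f x n ε ⊆ Metric.ball x (ε / lam ^ (n - 1)) := by
  intro x n hn ε _ hεδ
  obtain ⟨m, rfl⟩ := Nat.exists_eq_add_of_le' hn
  rw [Nat.add_sub_cancel]
  exact ⟨ball_subset_dynBall (hlam.le.trans hlamLam) (fun x y h => (hexp x y h).2) hεδ.le,
    dynBall_subset_ball (zero_lt_one.trans hlam) (fun x y h => (hexp x y h).1) hεδ.le⟩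

/-- If `λ d(x,y) ≤ d(f x, f y) ≤ Λ d(x,y)` whenever `d(x,y) < δ`, with `1 < λ ≤ Λ`, then for
`0 < ε < δ` and `n ≥ 1` one has `B(x, ε Λ^{-(n-1)}) ⊆ B(x,n,ε) ⊆ B(x, ε λ^{-(n-1)})`. -/
theorem stmt_15 {X : Type*} [MetricSpace X] (f : X → X) (δ lam Lam : ℝ)
    (hδ : 0 < δ) (hlam : 1 < lam) (hlamLam : lam ≤ Lam)
    (hexp : ∀ x y : X, dist x y < δ →
      lam * dist x y ≤ dist (f x) (f y) ∧ dist (f x) (f y) ≤ Lam * dist x y) :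
    ∀ (x : X) (n : ℕ), 1 ≤ n → ∀ ε : ℝ, 0 < ε → ε < δ →
      Metric.ball x (ε / Lam ^ (n - 1)) ⊆ dynBall f x n ε ∧
      dynBall f x n ε ⊆ Metric.ball x (ε / lam ^ (n - 1)) :=
  stmt_15_general f δ lam Lam hlam hlamLam hexp

end
end

section
/- Let (X,d) be a compact metric space, f : X → X a continuous map, μ an ergodic f-invariant Borel probability measure, and φ : X → ℝ a continuous function. Set S_nφ(B(x,n,ε)) = sup{ Σ_{j=0}^{n−1} φ(f^j(y)) : y ∈ B(x,n,ε) }. Then for μ-almost every x ∈ X, lim_{ε→0} limsup_{n→∞} (1/n) S_nφ(B(x,n,ε)) = lim_{ε→0} liminf_{n→∞} (1/n) S_nφ(B(x,n,ε)) = ∫ φ dμ. -/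
open MeasureTheory Filter Set Metric Topology
open scoped ENNReal NNReal

noncomputable section

/-- The supremum `S_nφ(B(x,n,ε)) = sup {∑_{j<n} φ(f^j y) : y ∈ B(x,n,ε)}` of Birkhoff sums
over a dynamical ball. -/
def birkSup {X : Type*} [PseudoMetricSpace X] (f : X → X) (φ : X → ℝ) (x : X) (n : ℕ)
    (ε : ℝ) : ℝ :=
  sSup ((fun y => ∑ j ∈ Finset.range n, φ (f^[j] y)) '' dynBall f x n ε)

/-!
For `ε` below the modulus of uniform continuity of `φ` at scale `r`, the Birkhoff sums of `φ`
over `B(x,n,ε)` differ from `S_nφ(x)` by at most `n r`, so `(1/n) S_nφ(B(x,n,ε))` lies between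
the Birkhoff average at `x` and that average plus `r`. Everything therefore follows from
Birkhoff's pointwise ergodic theorem for the bounded measurable function `φ`, proved here from the
maximal ergodic theorem: the limsup of the Birkhoff averages is `f`-invariant, hence a.e. constant
by ergodicity, and that constant cannot exceed `∫ φ dμ`.
-/

lemma limsup_le_limsup_of_tendsto_sub {ι : Type*} {l : Filter ι} [l.NeBot] {u v : ι → ℝ}
    (hv : IsBoundedUnder (· ≤ ·) l v) (hv' : IsBoundedUnder (· ≥ ·) l v)
    (h : Tendsto (u - v) l (𝓝 0)) :
    limsup u l ≤ limsup v l :=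
  calc limsup u l = limsup (v + (u - v)) l := by rw [add_sub_cancel]
    _ ≤ limsup v l + limsup (u - v) l :=
      limsup_add_le hv' hv h.isBoundedUnder_ge.isCoboundedUnder_le h.isBoundedUnder_le
    _ = limsup v l := by rw [h.limsup_eq, add_zero]

lemma limsup_eq_limsup_of_tendsto_sub {ι : Type*} {l : Filter ι} [l.NeBot] {u v : ι → ℝ}
    (hu : IsBoundedUnder (· ≤ ·) l u) (hu' : IsBoundedUnder (· ≥ ·) l u)
    (hv : IsBoundedUnder (· ≤ ·) l v) (hv' : IsBoundedUnder (· ≥ ·) l v)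
    (h : Tendsto (u - v) l (𝓝 0)) :
    limsup u l = limsup v l :=
  (limsup_le_limsup_of_tendsto_sub hv hv' h).antisymm
    (limsup_le_limsup_of_tendsto_sub hu hu' (by simpa [Pi.sub_def] using h.neg))

lemma le_liminf_and_limsup_le_of_mem_Icc {u b : ℕ → ℝ} {c r : ℝ}
    (hu : Tendsto u atTop (𝓝 c)) (hb : ∀ n, b n ∈ Icc (u n) (u n + r)) :
    c ≤ liminf b atTop ∧ liminf b atTop ≤ limsup b atTop ∧ limsup b atTop ≤ c + r := by
  have hur : Tendsto (u · + r) atTop (𝓝 (c + r)) := hu.add_const r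
  have hb_le : IsBoundedUnder (· ≤ ·) atTop b :=
    hur.isBoundedUnder_le.mono_le (.of_forall fun n => (hb n).2)
  have hb_ge : IsBoundedUnder (· ≥ ·) atTop b :=
    hu.isBoundedUnder_ge.mono_ge (.of_forall fun n => (hb n).1)
  refine ⟨?_, liminf_le_limsup hb_le hb_ge, ?_⟩
  · calc c = liminf u atTop := hu.liminf_eq.symm
      _ ≤ liminf b atTop := liminf_le_liminf (.of_forall fun n => (hb n).1)
          hu.isBoundedUnder_ge hb_le.isCoboundedUnder_ge
  · calc limsup b atTop ≤ limsup (u · + r) atTop := limsup_le_limsup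
          (.of_forall fun n => (hb n).2) hb_ge.isCoboundedUnder_le hur.isBoundedUnder_le
      _ = c + r := hur.limsup_eq

lemma tendsto_limsup_and_liminf_of_eventually_mem_Icc {ι : Type*} {l : Filter ι}
    {u : ℕ → ℝ} {c : ℝ} (hu : Tendsto u atTop (𝓝 c)) {b : ι → ℕ → ℝ}
    (hb : ∀ r > 0, ∀ᶠ i in l, ∀ n, b i n ∈ Icc (u n) (u n + r)) :
    Tendsto (fun i => limsup (b i) atTop) l (𝓝 c) ∧
      Tendsto (fun i => liminf (b i) atTop) l (𝓝 c) := by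
  have hlow (a : ℝ) (ha : a < c) :
      ∀ᶠ i in l, a < limsup (b i) atTop ∧ a < liminf (b i) atTop :=
    (hb 1 one_pos).mono fun i hi => by
      obtain ⟨h₁, h₂, -⟩ := le_liminf_and_limsup_le_of_mem_Icc hu hi
      exact ⟨by linarith, by linarith⟩
  have hhigh (a : ℝ) (ha : c < a) :
      ∀ᶠ i in l, limsup (b i) atTop < a ∧ liminf (b i) atTop < a :=
    (hb ((a - c) / 2) (by linarith)).mono fun i hi => by
      obtain ⟨-, h₂, h₃⟩ := le_liminf_and_limsup_le_of_mem_Icc hu hi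
      exact ⟨by linarith, by linarith⟩
  exact ⟨tendsto_order.2 ⟨fun a ha => (hlow a ha).mono fun _ h => h.1,
      fun a ha => (hhigh a ha).mono fun _ h => h.1⟩,
    tendsto_order.2 ⟨fun a ha => (hlow a ha).mono fun _ h => h.2,
      fun a ha => (hhigh a ha).mono fun _ h => h.2⟩⟩

section MaximalErgodic

variable {α : Type*} {f : α → α} {g : α → ℝ} {N : ℕ} {x : α}

def maxBirkhoffSum (f : α → α) (g : α → ℝ) (N : ℕ) (x : α) : ℝ :=
  (Finset.range (N + 1)).sup' Finset.nonempty_range_add_one (birkhoffSum f g · x)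

lemma maxBirkhoffSum_nonneg : 0 ≤ maxBirkhoffSum f g N x := by
  have := Finset.le_sup' (birkhoffSum f g · x) (Finset.mem_range.2 N.succ_pos)
  rwa [birkhoffSum_zero] at this

lemma zero_lt_maxBirkhoffSum_iff :
    0 < maxBirkhoffSum f g N x ↔ ∃ k ≤ N, 0 < birkhoffSum f g k x := by
  simp [maxBirkhoffSum, Finset.lt_sup'_iff]

lemma maxBirkhoffSum_le_add_maxBirkhoffSum_apply (hx : 0 < maxBirkhoffSum f g N x) :
    maxBirkhoffSum f g N x ≤ g x + maxBirkhoffSum f g N (f x) := by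
  obtain ⟨k, hk, hmax⟩ := Finset.exists_mem_eq_sup' Finset.nonempty_range_add_one
    (birkhoffSum f g · x)
  rw [maxBirkhoffSum, hmax] at hx ⊢
  cases k with
  | zero => simp at hx
  | succ m =>
    rw [birkhoffSum_succ']
    gcongr
    exact Finset.le_sup' (birkhoffSum f g · (f x))
      (Finset.mem_range.2 (by simp at hk; omega))

variable [MeasurableSpace α] {μ : Measure α}

lemma measurable_birkhoffSum (hf : Measurable f) (hg : Measurable g) (n : ℕ) :
    Measurable (birkhoffSum f g n) :=
  Finset.measurable_sum _ fun k _ => hg.comp (hf.iterate k)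

lemma measurable_maxBirkhoffSum (hf : Measurable f) (hg : Measurable g) (N : ℕ) :
    Measurable (maxBirkhoffSum f g N) :=
  Finset.measurable_range_sup'' fun k _ => measurable_birkhoffSum hf hg k

lemma integrable_birkhoffSum (hf : MeasurePreserving f μ μ) (hg : Integrable g μ) (n : ℕ) :
    Integrable (birkhoffSum f g n) μ :=
  integrable_finsetSum _ fun k _ => (hf.iterate k).integrable_comp_of_integrable hg

lemma integrable_maxBirkhoffSum (hf : MeasurePreserving f μ μ) (hg : Integrable g μ) (N : ℕ) :
    Integrable (maxBirkhoffSum f g N) μ := by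
  have : maxBirkhoffSum f g N =
      (Finset.range (N + 1)).sup' Finset.nonempty_range_add_one (birkhoffSum f g) := by
    ext x; simp [maxBirkhoffSum, Finset.sup'_apply]
  rw [this]
  exact Finset.sup'_induction _ _ (p := (Integrable · μ)) (fun _ h₁ _ h₂ => h₁.sup h₂)
    fun k _ => integrable_birkhoffSum hf hg k

/-- The maximal ergodic theorem. Garsia's proof: on `{0 < M}` we have `M - M ∘ f ≤ g`, off it
`M - M ∘ f ≤ 0`, and `∫ (M - M ∘ f) = 0`. -/
theorem setIntegral_maxBirkhoffSum_pos_nonneg (hf : MeasurePreserving f μ μ)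
    (hgm : Measurable g) (hg : Integrable g μ) (N : ℕ) :
    0 ≤ ∫ x in {x | 0 < maxBirkhoffSum f g N x}, g x ∂μ := by
  set M := maxBirkhoffSum f g N
  set A := {x | 0 < M x}
  have hMm : Measurable M := measurable_maxBirkhoffSum hf.measurable hgm N
  have hA : MeasurableSet A := measurableSet_lt measurable_const hMm
  have hM : Integrable M μ := integrable_maxBirkhoffSum hf hg N
  have hMf : Integrable (fun x => M (f x)) μ := hf.integrable_comp_of_integrable hM
  have hMf_eq : ∫ x, M (f x) ∂μ = ∫ x, M x ∂μ := by
    rw [← integral_map hf.measurable.aemeasurable hMm.aestronglyMeasurable, hf.map_eq]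
  calc 0 = ∫ x, (M x - M (f x)) ∂μ := by rw [integral_sub hM hMf, hMf_eq, sub_self]
    _ ≤ ∫ x, A.indicator (fun x => M x - M (f x)) x ∂μ := by
      refine integral_mono (hM.sub hMf) ((hM.sub hMf).indicator hA) fun x => ?_
      by_cases hx : x ∈ A
      · simp [hx]
      · rw [indicator_of_notMem hx]
        have hMx : M x ≤ 0 := by simpa [A] using hx
        linarith [maxBirkhoffSum_nonneg (f := f) (g := g) (N := N) (x := f x)]
    _ = ∫ x in A, (M x - M (f x)) ∂μ := integral_indicator hA
    _ ≤ ∫ x in A, g x ∂μ :=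
      setIntegral_mono_on (hM.sub hMf).integrableOn hg.integrableOn hA fun x hx => by
        linarith [maxBirkhoffSum_le_add_maxBirkhoffSum_apply hx]

theorem integral_nonneg_of_ae_exists_birkhoffSum_pos_s16 (hf : MeasurePreserving f μ μ)
    (hgm : Measurable g) (hg : Integrable g μ) (h : ∀ᵐ x ∂μ, ∃ n, 0 < birkhoffSum f g n x) :
    0 ≤ ∫ x, g x ∂μ := by
  set A : ℕ → Set α := fun N => {x | 0 < maxBirkhoffSum f g N x}
  have hA (N : ℕ) : MeasurableSet (A N) :=
    measurableSet_lt measurable_const (measurable_maxBirkhoffSum hf.measurable hgm N)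
  have hA_mono : Monotone A := fun N N' hN x hx => by
    obtain ⟨k, hk, hpos⟩ := zero_lt_maxBirkhoffSum_iff.1 hx
    exact zero_lt_maxBirkhoffSum_iff.2 ⟨k, hk.trans hN, hpos⟩
  have hA_ae : ∀ᵐ x ∂μ, x ∈ ⋃ N, A N := h.mono fun x ⟨n, hn⟩ =>
    mem_iUnion.2 ⟨n, zero_lt_maxBirkhoffSum_iff.2 ⟨n, le_rfl, hn⟩⟩
  have hlim := tendsto_setIntegral_of_monotone hA hA_mono hg.integrableOn
  rw [setIntegral_eq_integral_of_ae_compl_eq_zero (hA_ae.mono fun x hx hx' => absurd hx hx')]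
    at hlim
  exact ge_of_tendsto' hlim fun N => setIntegral_maxBirkhoffSum_pos_nonneg hf hgm hg N

theorem le_integral_of_ae_frequently_lt_birkhoffAverage [IsProbabilityMeasure μ]
    (hf : MeasurePreserving f μ μ) (hgm : Measurable g) (hg : Integrable g μ) {a : ℝ}
    (h : ∀ᵐ x ∂μ, ∃ᶠ n in atTop, a < birkhoffAverage ℝ f g n x) :
    a ≤ ∫ x, g x ∂μ := by
  have hpos : ∀ᵐ x ∂μ, ∃ n, 0 < birkhoffSum f (fun y => g y - a) n x := h.mono fun x hx => by
    obtain ⟨n, hn, hn0⟩ := (hx.and_eventually (eventually_gt_atTop 0)).exists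
    refine ⟨n, ?_⟩
    have hn0' : (0 : ℝ) < n := Nat.cast_pos.2 hn0
    rw [birkhoffAverage, smul_eq_mul, ← div_eq_inv_mul, lt_div_iff₀ hn0'] at hn
    simp only [birkhoffSum, Finset.sum_sub_distrib, Finset.sum_const, Finset.card_range,
      nsmul_eq_mul] at hn ⊢
    linarith
  have := integral_nonneg_of_ae_exists_birkhoffSum_pos_s16 (g := fun y => g y - a) hf
    (hgm.sub measurable_const) (hg.sub (integrable_const a)) hpos
  rw [integral_sub hg (integrable_const a), integral_const, probReal_univ, one_smul] at this
  linarith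

end MaximalErgodic

lemma norm_birkhoffAverage_le {α E : Type*} (𝕜 : Type*) [RCLike 𝕜] [NormedAddCommGroup E]
    [NormedSpace 𝕜 E] {f : α → α} {g : α → E} {C : ℝ} (hgC : ∀ x, ‖g x‖ ≤ C) (n : ℕ) (x : α) :
    ‖birkhoffAverage 𝕜 f g n x‖ ≤ C := by
  rcases n.eq_zero_or_pos with rfl | hn
  · simpa using (norm_nonneg _).trans (hgC x)
  have hn' : (0 : ℝ) < n := Nat.cast_pos.2 hn
  rw [birkhoffAverage, norm_smul, norm_inv, RCLike.norm_natCast, inv_mul_le_iff₀ hn']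
  calc ‖birkhoffSum f g n x‖ ≤ ∑ k ∈ Finset.range n, ‖g (f^[k] x)‖ := norm_sum_le _ _
    _ ≤ ∑ _k ∈ Finset.range n, C := Finset.sum_le_sum fun k _ => hgC _
    _ = n * C := by simp

section PointwiseErgodic

variable {α : Type*} {f : α → α} {g : α → ℝ} {C : ℝ}

lemma isBoundedUnder_birkhoffAverage (hgC : ∀ x, ‖g x‖ ≤ C) (l : Filter ℕ) (x : α) :
    IsBoundedUnder (· ≤ ·) l (birkhoffAverage ℝ f g · x) ∧
      IsBoundedUnder (· ≥ ·) l (birkhoffAverage ℝ f g · x) :=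
  isBoundedUnder_le_abs.1 <| isBoundedUnder_of ⟨C, fun n => norm_birkhoffAverage_le ℝ hgC n x⟩

lemma limsup_birkhoffAverage_apply (hgC : ∀ x, ‖g x‖ ≤ C) (x : α) :
    limsup (birkhoffAverage ℝ f g · (f x)) atTop = limsup (birkhoffAverage ℝ f g · x) atTop :=
  limsup_eq_limsup_of_tendsto_sub (isBoundedUnder_birkhoffAverage hgC _ _).1
    (isBoundedUnder_birkhoffAverage hgC _ _).2 (isBoundedUnder_birkhoffAverage hgC _ _).1
    (isBoundedUnder_birkhoffAverage hgC _ _).2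
    (tendsto_birkhoffAverage_apply_sub_birkhoffAverage' ℝ
      (isBounded_iff_forall_norm_le.2 ⟨C, by rintro _ ⟨x, rfl⟩; exact hgC x⟩) f x)

variable [MeasurableSpace α] {μ : Measure α} [IsProbabilityMeasure μ]

/-- The limsup of the Birkhoff averages is `f`-invariant, hence a.e. equal to a constant `c`;
if `c` exceeded `∫ g`, a.e. point would have Birkhoff averages above some `a > ∫ g`
infinitely often, contradicting the maximal ergodic theorem. -/
theorem ae_limsup_birkhoffAverage_le (hf : Ergodic f μ) (hgm : Measurable g)
    (hgC : ∀ x, ‖g x‖ ≤ C) :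
    ∀ᵐ x ∂μ, limsup (birkhoffAverage ℝ f g · x) atTop ≤ ∫ x, g x ∂μ := by
  have hLm : Measurable fun x => limsup (birkhoffAverage ℝ f g · x) atTop :=
    Measurable.limsup fun n => (measurable_birkhoffSum hf.measurable hgm n).const_smul (n : ℝ)⁻¹
  obtain ⟨c, hc⟩ := hf.toPreErgodic.ae_eq_const_of_ae_eq_comp hLm
    (funext (limsup_birkhoffAverage_apply hgC))
  have hg : Integrable g μ := .of_bound hgm.aestronglyMeasurable C (ae_of_all _ hgC)
  have hc_le : c ≤ ∫ x, g x ∂μ := le_of_forall_lt_imp_le_of_dense fun a ha =>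
    le_integral_of_ae_frequently_lt_birkhoffAverage hf.toMeasurePreserving hgm hg <|
      hc.mono fun x hx => frequently_lt_of_lt_limsup
        (isBoundedUnder_birkhoffAverage hgC _ x).2.isCoboundedUnder_le (ha.trans_eq hx.symm)
  exact hc.mono fun x hx => hx.trans_le hc_le

theorem ae_tendsto_birkhoffAverage_integral (hf : Ergodic f μ) (hgm : Measurable g)
    (hgC : ∀ x, ‖g x‖ ≤ C) :
    ∀ᵐ x ∂μ, Tendsto (birkhoffAverage ℝ f g · x) atTop (𝓝 (∫ x, g x ∂μ)) := by
  filter_upwards [ae_limsup_birkhoffAverage_le hf hgm hgC,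
    ae_limsup_birkhoffAverage_le (g := -g) hf hgm.neg (by simpa using hgC)] with x hup hlow
  simp only [birkhoffAverage_neg, Pi.neg_apply, integral_neg] at hlow
  refine tendsto_order.2 ⟨fun a ha => ?_, fun a ha =>
    eventually_lt_of_limsup_lt (hup.trans_lt ha) (isBoundedUnder_birkhoffAverage hgC _ x).1⟩
  have hneg_bdd : IsBoundedUnder (· ≤ ·) atTop (fun n => -birkhoffAverage ℝ f g n x) := by
    simpa [isBoundedUnder_le_neg] using (isBoundedUnder_birkhoffAverage hgC atTop x).2
  filter_upwards [eventually_lt_of_limsup_lt (hlow.trans_lt (neg_lt_neg ha)) hneg_bdd]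
    with n hn using neg_lt_neg_iff.1 hn

end PointwiseErgodic

section DynamicalBall

variable {X : Type*} [PseudoMetricSpace X] {f : X → X} {φ : X → ℝ} {x : X} {n : ℕ} {ε r : ℝ}

lemma mem_dynBall_self (hε : 0 < ε) : x ∈ dynBall f x n ε :=
  fun j _ => by simpa using hε

lemma birkhoffSum_le_add_of_mem_dynBall (hφ : ∀ a b, dist a b < ε → dist (φ a) (φ b) ≤ r)
    {y : X} (hy : y ∈ dynBall f x n ε) :
    birkhoffSum f φ n y ≤ birkhoffSum f φ n x + n * r :=
  calc birkhoffSum f φ n y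
      ≤ birkhoffSum f φ n x + dist (birkhoffSum f φ n x) (birkhoffSum f φ n y) := by
        linarith [Real.sub_le_dist (birkhoffSum f φ n y) (birkhoffSum f φ n x),
          dist_comm (birkhoffSum f φ n x) (birkhoffSum f φ n y)]
    _ ≤ birkhoffSum f φ n x + ∑ _k ∈ Finset.range n, r := by
      gcongr
      exact (dist_birkhoffSum_birkhoffSum_le f φ n x y).trans
        (Finset.sum_le_sum fun k hk => hφ _ _ (hy k (Finset.mem_range.1 hk)))
    _ = birkhoffSum f φ n x + n * r := by simp

lemma birkSup_div_mem_Icc (hε : 0 < ε) (hφ : ∀ a b, dist a b < ε → dist (φ a) (φ b) ≤ r)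
    (n : ℕ) :
    birkSup f φ x n ε / n ∈
      Icc (birkhoffAverage ℝ f φ n x) (birkhoffAverage ℝ f φ n x + r) := by
  have hr : 0 ≤ r := dist_nonneg.trans (hφ x x (by simpa using hε))
  have hle : ∀ z ∈ birkhoffSum f φ n '' dynBall f x n ε, z ≤ birkhoffSum f φ n x + n * r :=
    forall_mem_image.2 fun y hy => birkhoffSum_le_add_of_mem_dynBall hφ hy
  have hx : birkhoffSum f φ n x ∈ birkhoffSum f φ n '' dynBall f x n ε :=
    mem_image_of_mem _ (mem_dynBall_self hε)
  have hlow : birkhoffSum f φ n x ≤ birkSup f φ x n ε := le_csSup ⟨_, hle⟩ hx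
  have hup : birkSup f φ x n ε ≤ birkhoffSum f φ n x + n * r := csSup_le ⟨_, hx⟩ hle
  rcases n.eq_zero_or_pos with rfl | hn
  · simpa using hr
  have hn' : (0 : ℝ) < n := Nat.cast_pos.2 hn
  rw [birkhoffAverage, smul_eq_mul, ← div_eq_inv_mul]
  refine ⟨by gcongr, ?_⟩
  calc birkSup f φ x n ε / n ≤ (birkhoffSum f φ n x + n * r) / n := by gcongr
    _ = birkhoffSum f φ n x / n + r := by field_simp

end DynamicalBall

theorem stmt_16_general {X : Type*} [MetricSpace X] [CompactSpace X] [MeasurableSpace X] [BorelSpace X]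
    (f : X → X) (μ : Measure X) [IsProbabilityMeasure μ]
    (herg : Ergodic f μ) (φ : X → ℝ) (hφ : Continuous φ) :
    ∀ᵐ x ∂μ,
      Tendsto (fun ε : ℝ => Filter.atTop.limsup fun n : ℕ => birkSup f φ x n ε / n)
        (𝓝[>] (0:ℝ)) (𝓝 (∫ x, φ x ∂μ)) ∧
      Tendsto (fun ε : ℝ => Filter.atTop.liminf fun n : ℕ => birkSup f φ x n ε / n)
        (𝓝[>] (0:ℝ)) (𝓝 (∫ x, φ x ∂μ)) := by
  obtain ⟨C, hC⟩ := isCompact_univ.exists_bound_of_continuousOn hφ.continuousOn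
  filter_upwards [ae_tendsto_birkhoffAverage_integral herg hφ.measurable
    fun x => hC x (mem_univ x)] with x hx
  refine tendsto_limsup_and_liminf_of_eventually_mem_Icc hx fun r hr => ?_
  obtain ⟨δ, hδ, hφδ⟩ := Metric.uniformContinuous_iff.1
    (CompactSpace.uniformContinuous_of_continuous hφ) r hr
  filter_upwards [Ioo_mem_nhdsGT hδ] with ε hε
  exact birkSup_div_mem_Icc hε.1 fun a b hab => (hφδ (hab.trans hε.2)).le

/-- **Birkhoff averages over dynamical balls.** For an ergodic measure `μ` and a continuous
`φ`, for `μ`-a.e. `x`,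
`lim_{ε→0} limsup_n (1/n) S_nφ(B(x,n,ε)) = lim_{ε→0} liminf_n (1/n) S_nφ(B(x,n,ε)) = ∫ φ dμ`. -/
theorem stmt_16 {X : Type*} [MetricSpace X] [CompactSpace X] [MeasurableSpace X] [BorelSpace X]
    (f : X → X) (hf : Continuous f) (μ : Measure X) [IsProbabilityMeasure μ]
    (herg : Ergodic f μ) (φ : X → ℝ) (hφ : Continuous φ) :
    ∀ᵐ x ∂μ,
      Tendsto (fun ε : ℝ => Filter.atTop.limsup fun n : ℕ => birkSup f φ x n ε / n)
        (𝓝[>] (0:ℝ)) (𝓝 (∫ x, φ x ∂μ)) ∧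
      Tendsto (fun ε : ℝ => Filter.atTop.liminf fun n : ℕ => birkSup f φ x n ε / n)
        (𝓝[>] (0:ℝ)) (𝓝 (∫ x, φ x ∂μ)) :=
  stmt_16_general f μ herg φ hφ

end
end
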